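/- arXiv:2311.11993 — 5 statements merged into one kernel-verified Lean document; each statement's English description precedes it below -/
import Mathlib

section
/- Let (Ω, F, P) be a probability space, S a metric space equipped with its Borel σ-algebra, and (X_n)_{n≥1} measurable maps from Ω to S. Let (A_n)_{n≥1} and (B_n)_{n≥1} be sequences of events with P(A_n) > 0 and P(B_n) > 0 for all n, such that P(A_n | B_n) → 1 and P(B_n | A_n) → 1 as n → ∞. If the laws of X_n under the conditional probability measures P(· | A_n) converge weakly to the law of a random variable X (i.e. to a fixed Borel probability measure ν on S), then the laws of X_n under the conditional probability measures P(· | B_n) also converge weakly to ν. -/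
/-!
Conditioning `P(· | Aₙ)` further on `Bₙ` gives `P(· | Aₙ ∩ Bₙ)`. Since `P(Bₙ | Aₙ) → 1`, this
moves the integral of a function bounded by `C` by at most `2 C (1 - P(Bₙ | Aₙ)) → 0`.
Symmetrically for `P(· | Bₙ)`, so the laws of `Xₙ` under `P(· | Aₙ)` and under `P(· | Bₙ)`
are asymptotically the same when tested against bounded continuous functions.
-/

open MeasureTheory ProbabilityTheory Filter

namespace ProbabilityTheory

variable {Ω E : Type*} [MeasurableSpace Ω] [NormedAddCommGroup E] [NormedSpace ℝ E]

theorem setIntegral_eq_measureReal_smul_integral_cond {μ : Measure Ω} [IsFiniteMeasure μ]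
    (g : Ω → E) (s : Set Ω) : ∫ ω in s, g ω ∂μ = μ.real s • ∫ ω, g ω ∂μ[|s] := by
  by_cases hs : μ s = 0
  · simp [Measure.restrict_eq_zero.mpr hs, measureReal_def, hs]
  · rw [cond, integral_smul_measure, smul_smul, ENNReal.toReal_inv, ← measureReal_def,
      mul_inv_cancel₀ ((measureReal_ne_zero_iff).mpr hs), one_smul]

theorem norm_integral_cond_sub_integral_le {μ : Measure Ω} [IsZeroOrProbabilityMeasure μ]
    {s : Set Ω} (hs : MeasurableSet s) {g : Ω → E} (hg : AEStronglyMeasurable g μ) {C : ℝ}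
    (hC : 0 ≤ C) (hgC : ∀ᵐ ω ∂μ, ‖g ω‖ ≤ C) :
    ‖∫ ω, g ω ∂μ[|s] - ∫ ω, g ω ∂μ‖ ≤ 2 * C * (1 - μ.real s) := by
  rcases eq_zero_or_isProbabilityMeasure μ with rfl | hμ
  · simp [cond, hC]
  have hgi : Integrable g μ := .of_bound hg C hgC
  have hcond : ‖∫ ω, g ω ∂μ[|s]‖ ≤ C :=
    norm_integral_le_of_norm_le_const (cond_absolutelyContinuous.ae_le hgC) |>.trans
      (mul_le_of_le_one_right hC measureReal_le_one)
  have hcompl : ‖∫ ω in sᶜ, g ω ∂μ‖ ≤ C * (1 - μ.real s) := by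
    rw [← probReal_compl_eq_one_sub hs]
    exact norm_setIntegral_le_of_norm_le_const_ae (measure_lt_top _ _) (ae_restrict_of_ae hgC)
  have hsplit : ∫ ω, g ω ∂μ[|s] - ∫ ω, g ω ∂μ
      = (1 - μ.real s) • ∫ ω, g ω ∂μ[|s] - ∫ ω in sᶜ, g ω ∂μ := by
    rw [← integral_add_compl hs hgi, setIntegral_eq_measureReal_smul_integral_cond, sub_smul,
      one_smul]
    abel
  have hm : 0 ≤ 1 - μ.real s := sub_nonneg.mpr measureReal_le_one
  calc ‖∫ ω, g ω ∂μ[|s] - ∫ ω, g ω ∂μ‖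
      ≤ (1 - μ.real s) * ‖∫ ω, g ω ∂μ[|s]‖ + ‖∫ ω in sᶜ, g ω ∂μ‖ := by
        rw [hsplit]
        exact (norm_sub_le _ _).trans_eq (by rw [norm_smul, Real.norm_of_nonneg hm])
    _ ≤ 2 * C * (1 - μ.real s) := by nlinarith

theorem tendsto_integral_cond_sub_integral {μ : ℕ → Measure Ω}
    [∀ n, IsZeroOrProbabilityMeasure (μ n)] {s : ℕ → Set Ω} (hs : ∀ n, MeasurableSet (s n))
    (hμs : Tendsto (fun n => μ n (s n)) atTop (nhds 1)) {g : ℕ → Ω → E}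
    (hg : ∀ n, AEStronglyMeasurable (g n) (μ n)) {C : ℝ} (hC : 0 ≤ C)
    (hgC : ∀ n ω, ‖g n ω‖ ≤ C) :
    Tendsto (fun n => ∫ ω, g n ω ∂(μ n)[|s n] - ∫ ω, g n ω ∂(μ n)) atTop (nhds 0) := by
  have hreal : Tendsto (fun n => (μ n).real (s n)) atTop (nhds 1) :=
    (ENNReal.tendsto_toReal ENNReal.one_ne_top).comp hμs
  have hbound : Tendsto (fun n => 2 * C * (1 - (μ n).real (s n))) atTop (nhds 0) := by
    simpa using (hreal.const_sub 1).const_mul (2 * C)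
  exact squeeze_zero_norm (fun n => norm_integral_cond_sub_integral_le (hs n) (hg n) hC
    (.of_forall (hgC n))) hbound

end ProbabilityTheory

theorem conditional_weak_convergence_transfer_general
    {Ω : Type*} [MeasurableSpace Ω] (P : Measure Ω) [IsProbabilityMeasure P]
    {S : Type*} [MetricSpace S] [MeasurableSpace S] [BorelSpace S]
    (X : ℕ → Ω → S) (hX : ∀ n, Measurable (X n))
    (A B : ℕ → Set Ω) (hAm : ∀ n, MeasurableSet (A n)) (hBm : ∀ n, MeasurableSet (B n))
    (hAB : Tendsto (fun n => (P[|B n]) (A n)) atTop (nhds 1))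
    (hBA : Tendsto (fun n => (P[|A n]) (B n)) atTop (nhds 1))
    (ν : Measure S)
    (hconv : ∀ f : BoundedContinuousFunction S ℝ,
      Tendsto (fun n => ∫ x, f x ∂(Measure.map (X n) (P[|A n]))) atTop
        (nhds (∫ x, f x ∂ν))) :
    ∀ f : BoundedContinuousFunction S ℝ,
      Tendsto (fun n => ∫ x, f x ∂(Measure.map (X n) (P[|B n]))) atTop
        (nhds (∫ x, f x ∂ν)) := by
  intro f
  have hmap : ∀ n (μ : Measure Ω), ∫ x, f x ∂(μ.map (X n)) = ∫ ω, f (X n ω) ∂μ := fun n _ =>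
    integral_map (hX n).aemeasurable f.continuous.aestronglyMeasurable
  have hfX : ∀ n (μ : Measure Ω), AEStronglyMeasurable (fun ω => f (X n ω)) μ := fun n _ =>
    (f.continuous.measurable.comp (hX n)).aestronglyMeasurable
  have hbound : ∀ n ω, ‖f (X n ω)‖ ≤ ‖f‖ := fun n ω => f.norm_coe_le_norm _
  have hcloseA := tendsto_integral_cond_sub_integral hBm hBA (fun n => hfX n _) (norm_nonneg f) hbound
  have hcloseB := tendsto_integral_cond_sub_integral hAm hAB (fun n => hfX n _) (norm_nonneg f) hbound
  simp only [cond_cond_eq_cond_inter (hAm _) (hBm _), cond_cond_eq_cond_inter (hBm _) (hAm _),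
    Set.inter_comm (B _)] at hcloseA hcloseB
  simpa [hmap] using (hconv f).add (hcloseA.sub hcloseB)

/-- If `P(Aₙ | Bₙ) → 1` and `P(Bₙ | Aₙ) → 1`, and the laws of `Xₙ` under the conditional
measures `P(· | Aₙ)` converge weakly to a fixed Borel probability measure `ν`, then the laws
of `Xₙ` under `P(· | Bₙ)` also converge weakly to `ν`. -/
theorem conditional_weak_convergence_transfer
    {Ω : Type*} [MeasurableSpace Ω] (P : Measure Ω) [IsProbabilityMeasure P]
    {S : Type*} [MetricSpace S] [MeasurableSpace S] [BorelSpace S]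
    (X : ℕ → Ω → S) (hX : ∀ n, Measurable (X n))
    (A B : ℕ → Set Ω) (hAm : ∀ n, MeasurableSet (A n)) (hBm : ∀ n, MeasurableSet (B n))
    (hApos : ∀ n, 0 < P (A n)) (hBpos : ∀ n, 0 < P (B n))
    (hAB : Tendsto (fun n => (P[|B n]) (A n)) atTop (nhds 1))
    (hBA : Tendsto (fun n => (P[|A n]) (B n)) atTop (nhds 1))
    (ν : Measure S) [IsProbabilityMeasure ν]
    (hconv : ∀ f : BoundedContinuousFunction S ℝ,
      Tendsto (fun n => ∫ x, f x ∂(Measure.map (X n) (P[|A n]))) atTop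
        (nhds (∫ x, f x ∂ν))) :
    ∀ f : BoundedContinuousFunction S ℝ,
      Tendsto (fun n => ∫ x, f x ∂(Measure.map (X n) (P[|B n]))) atTop
        (nhds (∫ x, f x ∂ν)) :=
  conditional_weak_convergence_transfer_general P X hX A B hAm hBm hAB hBA ν hconv
end

section
/- Let (Ω, F, P) be a probability space and A, B, E events with P(A) > 0, P(B) > 0 and P(A ∩ B) > 0. Then P(E | B) ≥ (P(E | A) − P(Bᶜ | A)) · P(A | B) / P(B | A). -/
open MeasureTheory ProbabilityTheory

/-- For events `A, B, E` with `P(A) > 0`, `P(B) > 0`, `P(A ∩ B) > 0`, one has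
`P(E | B) ≥ (P(E | A) − P(Bᶜ | A)) · P(A | B) / P(B | A)`. -/
theorem cond_prob_switch_bound
    {Ω : Type*} [MeasurableSpace Ω] (P : Measure Ω) [IsProbabilityMeasure P]
    (A B E : Set Ω) (hAm : MeasurableSet A) (hBm : MeasurableSet B) (hEm : MeasurableSet E)
    (hA : 0 < P A) (hB : 0 < P B) (hABpos : 0 < P (A ∩ B)) :
    ((P[|B]) E).toReal ≥
      (((P[|A]) E).toReal - ((P[|A]) Bᶜ).toReal) * ((P[|B]) A).toReal / ((P[|A]) B).toReal := by
  have hfin : ∀ s : Set Ω, P s ≠ ⊤ := fun s => measure_ne_top P s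
  rw [cond_apply hBm, cond_apply hAm, cond_apply hAm, cond_apply hBm, cond_apply hAm]
  have hApos : 0 < (P A).toReal := ENNReal.toReal_pos hA.ne' (hfin A)
  have hBpos : 0 < (P B).toReal := ENNReal.toReal_pos hB.ne' (hfin B)
  have hABr : 0 < (P (A ∩ B)).toReal := ENNReal.toReal_pos hABpos.ne' (hfin _)
  have hBA : P (B ∩ A) = P (A ∩ B) := by rw [Set.inter_comm]
  -- key: P (A ∩ E) ≤ P (B ∩ E) + P (A ∩ Bᶜ)
  have hkey : (P (A ∩ E)).toReal ≤ (P (B ∩ E)).toReal + (P (A ∩ Bᶜ)).toReal := by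
    have hsub : A ∩ E ⊆ (B ∩ E) ∪ (A ∩ Bᶜ) := by
      intro x ⟨hxA, hxE⟩
      by_cases hxB : x ∈ B
      · exact Or.inl ⟨hxB, hxE⟩
      · exact Or.inr ⟨hxA, hxB⟩
    have := (measure_mono hsub).trans (measure_union_le (μ := P) _ _)
    have := ENNReal.toReal_mono (by simp [hfin]) this
    rwa [ENNReal.toReal_add (hfin _) (hfin _)] at this
  rw [ENNReal.toReal_mul, ENNReal.toReal_mul, ENNReal.toReal_mul, ENNReal.toReal_mul,
    ENNReal.toReal_mul, ENNReal.toReal_inv, ENNReal.toReal_inv, hBA]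
  set a := (P A).toReal
  set b := (P B).toReal
  set c := (P (A ∩ B)).toReal
  set x := (P (A ∩ E)).toReal
  set y := (P (A ∩ Bᶜ)).toReal
  set z := (P (B ∩ E)).toReal
  have : (a⁻¹ * x - a⁻¹ * y) * (b⁻¹ * c) / (a⁻¹ * c) = (x - y) / b := by
    field_simp
  rw [this]
  rw [ge_iff_le, div_le_iff₀ hBpos]
  calc x - y ≤ z := by linarith
    _ = b⁻¹ * z * b := by field_simp
end

section
/- Fix α ∈ (2/3, 1). Then ∑_{m=1}^∞ p_m = 1 − α. -/
/-- The peeling probability `p_m` for a hyperbolic half-planar triangulation with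
parameter `α`:  `p_m = (2/4^m) ((2m-2)!/((m-1)!(m+1)!)) (2/α - 2)^m ((3α-2)m + 1)`. -/
noncomputable def peelP (α : ℝ) (m : ℕ) : ℝ :=
  (2 / 4 ^ m) *
    ((Nat.factorial (2 * m - 2) : ℝ) /
      ((Nat.factorial (m - 1) : ℝ) * (Nat.factorial (m + 1) : ℝ))) *
    (2 / α - 2) ^ m * ((3 * α - 2) * m + 1)

/-- The critical site-percolation probability `p_c = (1/2)(1 - √(3 - 2/α))`. -/
noncomputable def pcrit (α : ℝ) : ℝ := (1 / 2) * (1 - Real.sqrt (3 - 2 / α))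

/-- The normalising constant `c_α = 2/(1 - √(α(3α-2)))`. -/
noncomputable def cAlpha (α : ℝ) : ℝ := 2 / (1 - Real.sqrt (α * (3 * α - 2)))

/-- The increment law `μ` of the peeling random walk: `μ(1) = c_α α p_c`,
`μ(-m) = (1/2) c_α p_m` for `m ≥ 1`, and `μ(i) = 0` otherwise. -/
noncomputable def incLaw (α : ℝ) : ℤ → ℝ := fun i =>
  if i = 1 then cAlpha α * α * pcrit α
  else if i ≤ -1 then (1 / 2) * cAlpha α * peelP α (-i).toNat
  else 0

private lemma catalan_le_four_pow (n : ℕ) : catalan n ≤ 4 ^ n := by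
  have h1 : catalan n ≤ n.centralBinom := by
    calc catalan n ≤ (n + 1) * catalan n := Nat.le_mul_of_pos_left _ n.succ_pos
      _ = n.centralBinom := succ_mul_catalan_eq_centralBinom n
  have h2 : n.centralBinom ≤ 4 ^ n := by
    rw [Nat.centralBinom_eq_two_mul_choose]
    calc (2 * n).choose n ≤ ∑ i ∈ Finset.range (2 * n + 1), (2 * n).choose i :=
          Finset.single_le_sum (fun i _ => Nat.zero_le _)
            (Finset.mem_range.mpr (by omega))
      _ = 2 ^ (2 * n) := Nat.sum_range_choose _
      _ = 4 ^ n := by rw [pow_mul]; norm_num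
  exact h1.trans h2

private lemma peelP_eq_sub (α : ℝ) (hα0 : α ≠ 0) (m : ℕ) :
    peelP α (m + 1) =
      (1 - α) * ((1 - α) / (2 * α)) ^ m * catalan m -
        (1 - α) * ((1 - α) / (2 * α)) ^ (m + 1) * catalan (m + 1) := by
  have hF : (Nat.factorial m : ℝ) ≠ 0 := Nat.cast_ne_zero.mpr (Nat.factorial_ne_zero m)
  have hm1 : ((m : ℝ) + 1) ≠ 0 := by positivity
  have hm2 : ((m : ℝ) + 2) ≠ 0 := by positivity
  -- (2m)! = ((m+1) * catalan m) * m! * m!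
  have hfacN : (2 * m).factorial = (m + 1) * catalan m * m.factorial * m.factorial := by
    have h := Nat.choose_mul_factorial_mul_factorial (show m ≤ 2 * m by omega)
    rw [succ_mul_catalan_eq_centralBinom, Nat.centralBinom_eq_two_mul_choose]
    simpa [show 2 * m - m = m by omega] using h.symm
  have hfacR : ((2 * m).factorial : ℝ)
      = ((m : ℝ) + 1) * catalan m * m.factorial * m.factorial := by
    exact_mod_cast congrArg (Nat.cast (R := ℝ)) hfacN
  -- (m+2) * catalan (m+1) = 2 * (2m+1) * catalan m
  have hc2 : ((m : ℝ) + 2) * catalan (m + 1) = 2 * (2 * (m : ℝ) + 1) * catalan m := by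
    have h1 : ((m : ℝ) + 2) * catalan (m + 1) = Nat.centralBinom (m + 1) := by
      exact_mod_cast congrArg (Nat.cast (R := ℝ)) (succ_mul_catalan_eq_centralBinom (m + 1))
    have h2 : ((m : ℝ) + 1) * Nat.centralBinom (m + 1)
        = 2 * (2 * (m : ℝ) + 1) * Nat.centralBinom m := by
      exact_mod_cast congrArg (Nat.cast (R := ℝ)) (Nat.succ_mul_centralBinom_succ m)
    have h3 : (Nat.centralBinom m : ℝ) = ((m : ℝ) + 1) * catalan m := by
      exact_mod_cast (congrArg (Nat.cast (R := ℝ)) (succ_mul_catalan_eq_centralBinom m)).symm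
    apply mul_left_cancel₀ hm1
    rw [h1, h2, h3]; ring
  have hcat1 : ((catalan (m + 1) : ℝ))
      = 2 * (2 * (m : ℝ) + 1) * catalan m / ((m : ℝ) + 2) := by
    rw [eq_div_iff hm2]; linarith [hc2]
  have hbase : (2 / α - 2 : ℝ) = 4 * ((1 - α) / (2 * α)) := by
    field_simp
    ring
  unfold peelP
  rw [show 2 * (m + 1) - 2 = 2 * m by omega, show m + 1 - 1 = m from rfl]
  rw [hfacR, hcat1, hbase,
    show Nat.factorial (m + 1 + 1) = (m + 2) * ((m + 1) * m.factorial) by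
      rw [Nat.factorial_succ, Nat.factorial_succ],
    mul_pow, pow_succ 4 m, pow_succ ((1 - α) / (2 * α)) m]
  push_cast
  field_simp
  ring

/-- `∑_{m=1}^∞ p_m = 1 - α`. -/
theorem peelP_sum (α : ℝ) (hα : α ∈ Set.Ioo (2 / 3 : ℝ) 1) :
    HasSum (fun m : ℕ => peelP α (m + 1)) (1 - α) := by
  obtain ⟨h1, h2⟩ := hα
  have hα0 : (0 : ℝ) < α := by linarith
  set t : ℝ := (1 - α) / (2 * α) with ht
  have ht0 : 0 ≤ t := div_nonneg (by linarith) (by linarith)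
  have ht4 : 4 * t < 1 := by
    rw [ht, mul_div_assoc']
    rw [div_lt_one (by linarith)]
    linarith
  set g : ℕ → ℝ := fun m => (1 - α) * t ^ m * catalan m with hg
  have hkey : ∀ m : ℕ, peelP α (m + 1) = g m - g (m + 1) := fun m =>
    peelP_eq_sub α hα0.ne' m
  have hnn : ∀ m : ℕ, 0 ≤ peelP α (m + 1) := by
    intro m
    unfold peelP
    have hx : (0 : ℝ) ≤ 2 / α - 2 := by
      rw [sub_nonneg, le_div_iff₀ hα0]; linarith
    have hlin : (0 : ℝ) ≤ (3 * α - 2) * ((m : ℕ) + 1 : ℕ) + 1 := by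
      have : (0 : ℝ) ≤ ((m : ℕ) + 1 : ℕ) := Nat.cast_nonneg _
      nlinarith
    exact mul_nonneg (mul_nonneg (mul_nonneg (by positivity) (by positivity))
      (pow_nonneg hx _)) hlin
  rw [hasSum_iff_tendsto_nat_of_nonneg hnn]
  have hsum : ∀ n : ℕ, ∑ i ∈ Finset.range n, peelP α (i + 1) = g 0 - g n := by
    intro n
    rw [Finset.sum_congr rfl fun i _ => hkey i, Finset.sum_range_sub']
  have hg0 : g 0 = 1 - α := by simp [hg]
  simp only [hsum, hg0]
  have hgto : Filter.Tendsto g Filter.atTop (nhds 0) := by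
    have hb : ∀ n : ℕ, |g n| ≤ (1 - α) * (4 * t) ^ n := by
      intro n
      have hgn0 : 0 ≤ g n := by
        apply mul_nonneg (mul_nonneg (by linarith) (pow_nonneg ht0 _)) (Nat.cast_nonneg _)
      rw [abs_of_nonneg hgn0, hg, mul_pow]
      have hcat : (catalan n : ℝ) ≤ 4 ^ n := by exact_mod_cast catalan_le_four_pow n
      calc (1 - α) * t ^ n * catalan n ≤ (1 - α) * t ^ n * 4 ^ n := by
            apply mul_le_mul_of_nonneg_left hcat
              (mul_nonneg (by linarith) (pow_nonneg ht0 _))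
        _ = (1 - α) * (4 ^ n * t ^ n) := by ring
    have hlim : Filter.Tendsto (fun n : ℕ => (1 - α) * (4 * t) ^ n)
        Filter.atTop (nhds 0) := by
      have := tendsto_pow_atTop_nhds_zero_of_lt_one (by linarith : (0:ℝ) ≤ 4 * t) ht4
      simpa using this.const_mul (1 - α)
    exact squeeze_zero_norm hb hlim
  simpa using Filter.Tendsto.const_sub (1 - α) hgto
end

section
/- Fix α ∈ (2/3, 1). Then ∑_{m=1}^∞ m · p_m = α − √(α·(3α−2)). -/
/-!
Put `t = (1/α - 1)/2`, so that `t ∈ [0, 1/4)`, `2/α - 2 = 4t` and `√(α(3α - 2)) = α√(1 - 4t)`.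
Since `(2n)!/(n!(n+2)!) = C(2n,n)/((n+1)(n+2))` and `6 C(2n,n) = (n+2)(2 Cat n + Cat (n+1))`,
the term `(n+1) p_{n+1}` is `t^{n+1} (2(3α-2) C(2n,n) - (α-1)(2 Cat n + Cat (n+1)))`, so the mean
is read off the generating functions `∑ C(2n,n) tⁿ = 1/√(1-4t)` and `∑ Cat n tⁿ = 2/(1+√(1-4t))`.
The first one squares to the geometric series `∑ (4t)ⁿ` by the convolution identity
`∑_{i+j=n} C(2i,i) C(2j,j) = 4ⁿ`; the second follows from `2 Cat n = 4 C(2n,n) - C(2n+2,n+1)`.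
-/

open Finset Finset.Nat

theorem two_mul_sum_antidiagonal_fst_mul {R : Type*} [CommSemiring R] (f : ℕ → R) (n : ℕ) :
    2 * ∑ p ∈ antidiagonal n, (p.1 : R) * (f p.1 * f p.2) =
      n * ∑ p ∈ antidiagonal n, f p.1 * f p.2 := by
  have hswap : ∑ p ∈ antidiagonal n, (p.1 : R) * (f p.1 * f p.2) =
      ∑ p ∈ antidiagonal n, (p.2 : R) * (f p.1 * f p.2) :=
    sum_antidiagonal_swap.symm.trans <| sum_congr rfl fun p _ => by
      simp only [Prod.fst_swap, Prod.snd_swap, mul_comm (f p.2)]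
  calc 2 * ∑ p ∈ antidiagonal n, (p.1 : R) * (f p.1 * f p.2)
      = ∑ p ∈ antidiagonal n, ((p.1 + p.2 : ℕ) : R) * (f p.1 * f p.2) := by
        rw [two_mul]; nth_rw 2 [hswap]
        rw [← sum_add_distrib]; push_cast; simp only [add_mul]
    _ = n * ∑ p ∈ antidiagonal n, f p.1 * f p.2 := by
        rw [mul_sum]
        exact sum_congr rfl fun p hp => by rw [mem_antidiagonal.mp hp]

namespace Nat

theorem sum_antidiagonal_centralBinom_mul_centralBinom (n : ℕ) :
    ∑ p ∈ antidiagonal n, centralBinom p.1 * centralBinom p.2 = 4 ^ n := by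
  induction n with
  | zero => simp
  | succ n ih =>
    have hsymm := two_mul_sum_antidiagonal_fst_mul centralBinom n
    have hsymm' := two_mul_sum_antidiagonal_fst_mul centralBinom (n + 1)
    simp only [Nat.cast_id, ih] at hsymm hsymm'
    apply Nat.eq_of_mul_eq_mul_left (by omega : 0 < n + 1)
    calc (n + 1) * ∑ p ∈ antidiagonal (n + 1), centralBinom p.1 * centralBinom p.2
        = 2 * ∑ p ∈ antidiagonal n, (p.1 + 1) * centralBinom (p.1 + 1) * centralBinom p.2 := by
          rw [← hsymm', sum_antidiagonal_succ]
          simp [mul_assoc]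
      _ = 4 * (2 * ∑ p ∈ antidiagonal n, p.1 * (centralBinom p.1 * centralBinom p.2))
            + 4 * ∑ p ∈ antidiagonal n, centralBinom p.1 * centralBinom p.2 := by
          simp only [succ_mul_centralBinom_succ, mul_sum, ← sum_add_distrib]
          exact sum_congr rfl fun p _ => by ring
      _ = (n + 1) * 4 ^ (n + 1) := by rw [hsymm, ih]; ring

theorem centralBinom_succ_add_two_mul_catalan (n : ℕ) :
    centralBinom (n + 1) + 2 * catalan n = 4 * centralBinom n := by
  apply Nat.eq_of_mul_eq_mul_left (by omega : 0 < n + 1)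
  rw [mul_add, succ_mul_centralBinom_succ, mul_left_comm, succ_mul_catalan_eq_centralBinom]
  ring

theorem two_mul_catalan_add_catalan_succ_mul (n : ℕ) :
    (2 * catalan n + catalan (n + 1)) * (n + 2) = 6 * centralBinom n := by
  apply Nat.eq_of_mul_eq_mul_left (by omega : 0 < n + 1)
  have h₀ := succ_mul_catalan_eq_centralBinom n
  have h₁ := succ_mul_catalan_eq_centralBinom (n + 1)
  have h₂ := succ_mul_centralBinom_succ n
  calc (n + 1) * ((2 * catalan n + catalan (n + 1)) * (n + 2))
      = 2 * (n + 2) * ((n + 1) * catalan n) + (n + 1) * ((n + 1 + 1) * catalan (n + 1)) := by ring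
    _ = (n + 1) * (6 * centralBinom n) := by rw [h₀, h₁, h₂]; ring

end Nat

open Nat in
theorem hasSum_centralBinom_mul_pow {t : ℝ} (ht₀ : 0 ≤ t) (ht : t < 1 / 4) :
    HasSum (fun n => (centralBinom n : ℝ) * t ^ n) (√(1 - 4 * t))⁻¹ := by
  have hnorm : Summable fun n => ‖(centralBinom n : ℝ) * t ^ n‖ := by
    refine Summable.of_nonneg_of_le (fun _ => norm_nonneg _) (fun n => ?_)
      (summable_geometric_of_lt_one (by positivity : 0 ≤ 4 * t) (by linarith))
    rw [Real.norm_of_nonneg (by positivity), mul_pow]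
    gcongr
    exact_mod_cast centralBinom_le_four_pow n
  set F := ∑' n, (centralBinom n : ℝ) * t ^ n
  have hsq : F * F = (1 - 4 * t)⁻¹ := by
    have hconv (n : ℕ) : ∑ p ∈ antidiagonal n,
        (centralBinom p.1 : ℝ) * t ^ p.1 * ((centralBinom p.2 : ℝ) * t ^ p.2) = (4 * t) ^ n := by
      calc _ = ∑ p ∈ antidiagonal n, ((centralBinom p.1 * centralBinom p.2 : ℕ) : ℝ) * t ^ n :=
            sum_congr rfl fun p hp => by rw [← mem_antidiagonal.mp hp]; push_cast; ring
        _ = (4 * t) ^ n := by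
            rw [← sum_mul, ← Nat.cast_sum, sum_antidiagonal_centralBinom_mul_centralBinom]
            push_cast; ring
    rw [tsum_mul_tsum_eq_tsum_sum_antidiagonal_of_summable_norm hnorm hnorm]
    simp only [hconv]
    exact tsum_geometric_of_lt_one (by positivity) (by linarith)
  have hF : F = (√(1 - 4 * t))⁻¹ := by
    rw [← Real.sqrt_inv, ← hsq, Real.sqrt_mul_self (tsum_nonneg fun n => by positivity)]
  exact hF ▸ hnorm.of_norm.hasSum

theorem hasSum_catalan_mul_pow {t : ℝ} (ht₀ : 0 ≤ t) (ht : t < 1 / 4) :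
    HasSum (fun n => (catalan n : ℝ) * t ^ n) (2 / (1 + √(1 - 4 * t))) := by
  rcases ht₀.eq_or_lt with rfl | ht₀'
  · convert hasSum_single (f := fun n => (catalan n : ℝ) * 0 ^ n) 0 fun n hn => by simp [hn]
    norm_num
  have hB := hasSum_centralBinom_mul_pow ht₀ ht
  have hB₁ := (hasSum_nat_add_iff' 1).mpr hB
  simp only [range_one, sum_singleton, Nat.centralBinom_zero, Nat.cast_one, pow_zero,
    mul_one] at hB₁
  set u := √(1 - 4 * t)
  have hu₀ : 0 < u := Real.sqrt_pos.mpr (by linarith)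
  have hu₂ : u ^ 2 = 1 - 4 * t := Real.sq_sqrt (by linarith)
  have hterm : (fun n => 2 * t * ((catalan n : ℝ) * t ^ n)) = fun n =>
      4 * t * ((Nat.centralBinom n : ℝ) * t ^ n) - (Nat.centralBinom (n + 1) : ℝ) * t ^ (n + 1) := by
    funext n
    have h := congrArg (Nat.cast (R := ℝ)) (Nat.centralBinom_succ_add_two_mul_catalan n)
    push_cast at h
    rw [pow_succ]
    linear_combination t ^ n * t * h
  have hsum : 2 * t * (2 / (1 + u)) = 4 * t * u⁻¹ - (u⁻¹ - 1) := by
    field_simp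
    linear_combination -hu₂
  rw [← hasSum_mul_left_iff (by positivity : 2 * t ≠ 0), hterm, hsum]
  exact (hB.mul_left (4 * t)).sub hB₁

open Nat in
theorem succ_mul_peelP_succ (α : ℝ) (n : ℕ) :
    ((n + 1 : ℕ) : ℝ) * peelP α (n + 1) = ((1 / α - 1) / 2) ^ (n + 1) *
      (2 * (3 * α - 2) * centralBinom n - (α - 1) * (2 * catalan n + catalan (n + 1))) := by
  have hfact : ((2 * n)! : ℝ) = centralBinom n * n ! * n ! := by
    rw [centralBinom_eq_two_mul_choose]
    exact_mod_cast (choose_mul_factorial_mul_factorial (by omega : n ≤ 2 * n)).symm.trans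
      (by rw [show 2 * n - n = n by omega])
  have hfact₂ : ((n + 1 + 1)! : ℝ) = (n + 2) * (n + 1) * n ! := by
    push_cast [factorial_succ]; ring
  have hcat := congrArg (Nat.cast (R := ℝ)) (two_mul_catalan_add_catalan_succ_mul n)
  push_cast at hcat
  unfold peelP
  rw [show 2 * (n + 1) - 2 = 2 * n by omega, Nat.add_sub_cancel, hfact, hfact₂,
    show 2 / α - 2 = 4 * ((1 / α - 1) / 2) by ring, mul_pow]
  generalize (1 / α - 1) / 2 = t
  have : (n ! : ℝ) ≠ 0 := by positivity
  field_simp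
  push_cast
  linear_combination (α - 1) * (n + 1) * t ^ (n + 1) * hcat

theorem peelP_mean_value {α t u : ℝ} (hu : 0 < u) (hu₂ : u ^ 2 = 1 - 4 * t)
    (hαt : α * (1 + 2 * t) = 1) :
    2 * (3 * α - 2) * t * u⁻¹ - (α - 1) * (2 * t * (2 / (1 + u)) + (2 / (1 + u) - 1)) =
      α - α * u := by
  obtain rfl : t = (1 - u ^ 2) / 4 := by linarith
  field_simp
  linear_combination (4 - 4 * u) * hαt

/-- `∑_{m=1}^∞ m p_m = α - √(α(3α-2))`. -/
theorem peelP_mean (α : ℝ) (hα : α ∈ Set.Ioo (2 / 3 : ℝ) 1) :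
    HasSum (fun m : ℕ => ((m + 1 : ℕ) : ℝ) * peelP α (m + 1))
      (α - Real.sqrt (α * (3 * α - 2))) := by
  obtain ⟨hα₁, hα₂⟩ := hα
  have hα₀ : 0 < α := by linarith
  set t := (1 / α - 1) / 2 with ht
  have ht₀ : 0 ≤ t := by linarith [(one_le_div hα₀).mpr hα₂.le]
  have ht₁ : t < 1 / 4 := by linarith [(div_lt_iff₀ hα₀).mpr (by linarith : 1 < 3 / 2 * α)]
  have hB := (hasSum_centralBinom_mul_pow ht₀ ht₁).mul_left (2 * (3 * α - 2) * t)
  have hC := hasSum_catalan_mul_pow ht₀ ht₁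
  have hC₁ := (hasSum_nat_add_iff' 1).mpr hC
  simp only [range_one, sum_singleton, catalan_zero, Nat.cast_one, pow_zero, mul_one] at hC₁
  have hterm : (fun m : ℕ => ((m + 1 : ℕ) : ℝ) * peelP α (m + 1)) = fun n =>
      2 * (3 * α - 2) * t * ((Nat.centralBinom n : ℝ) * t ^ n) -
        (α - 1) * (2 * t * ((catalan n : ℝ) * t ^ n) + (catalan (n + 1) : ℝ) * t ^ (n + 1)) := by
    funext n
    rw [succ_mul_peelP_succ]
    ring
  have hsqrt : √(α * (3 * α - 2)) = α * √(1 - 4 * t) := by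
    rw [show α * (3 * α - 2) = α ^ 2 * (1 - 4 * t) by rw [ht]; field_simp; ring,
      Real.sqrt_mul' _ (by linarith), Real.sqrt_sq hα₀.le]
  rw [hterm, hsqrt, ← peelP_mean_value (Real.sqrt_pos.mpr (by linarith))
    (Real.sq_sqrt (by linarith)) (by rw [ht]; field_simp; ring)]
  exact hB.sub (((hC.mul_left (2 * t)).add hC₁).mul_left (α - 1))
end

section
/- Let (B_t)_{t≥0} be a standard one-dimensional Brownian motion. Then for every real λ ≥ 1, P(sup_{t ∈ [0,1]} |B_t| ≥ λ) ≤ P(sup_{t ∈ [0,1]} |B_t| ≥ 1)^{⌊λ⌋}. -/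
/-!
Write `p = P(sup_{[0,1]} |B| ≥ 1)` and `n = ⌊λ⌋ ≥ 2` (the case `n = 1` is trivial). As `B 1` is
standard normal, `p ≥ P(|Z| ≥ 1) > 0.317`. Lévy's reflection inequality on the dyadic grids of
`[0,1]`, together with the continuity of paths, gives `P(sup |B| ≥ n) ≤ 2 P(|Z| ≥ n - 1/100)`, and
this Gaussian tail is below `0.317 ^ n`: for `n = 2` by integrating alternating Taylor polynomials
of `exp (-x²/2)`, for `n ≥ 3` by Mills' inequality.
-/

open MeasureTheory ProbabilityTheory Filter Set Real Function
open scoped NNReal ENNReal Nat Topology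

noncomputable section

namespace BrownianSupTail

def expNegTaylor (n : ℕ) (t : ℝ) : ℝ := ∑ i ∈ Finset.range n, (-t) ^ i / i !

lemma continuous_expNegTaylor (n : ℕ) : Continuous (expNegTaylor n) := by
  unfold expNegTaylor
  fun_prop

lemma hasDerivAt_expNegTaylor_succ (n : ℕ) (t : ℝ) :
    HasDerivAt (expNegTaylor (n + 1)) (-expNegTaylor n t) t := by
  induction n with
  | zero =>
    have h1 : expNegTaylor 1 = fun _ => 1 := by funext s; simp [expNegTaylor]
    simpa [h1, expNegTaylor] using hasDerivAt_const t (1 : ℝ)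
  | succ n ih =>
    have hterm : HasDerivAt (fun s : ℝ => (-s) ^ (n + 1) / (n + 1)!) (-((-t) ^ n / n !)) t := by
      refine (((hasDerivAt_neg t).fun_pow (n + 1)).div_const ((n + 1)! : ℝ)).congr_deriv ?_
      rw [Nat.factorial_succ, Nat.add_sub_cancel]
      push_cast
      field_simp
    have hsplit :
        expNegTaylor (n + 2) = fun s => expNegTaylor (n + 1) s + (-s) ^ (n + 1) / (n + 1)! := by
      funext s
      simp only [expNegTaylor, Finset.sum_range_succ _ (n + 1)]
    rw [hsplit]
    refine (ih.add hterm).congr_deriv ?_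
    simp only [expNegTaylor, Finset.sum_range_succ]
    ring

lemma neg_one_pow_mul_exp_neg_sub_expNegTaylor_nonneg (n : ℕ) {t : ℝ} (ht : 0 ≤ t) :
    0 ≤ (-1) ^ n * (exp (-t) - expNegTaylor n t) := by
  induction n generalizing t with
  | zero => simpa [expNegTaylor] using (exp_pos (-t)).le
  | succ n ih =>
    set R : ℝ → ℝ := fun s => (-1) ^ (n + 1) * (exp (-s) - expNegTaylor (n + 1) s)
    have hR : ∀ s, HasDerivAt R ((-1) ^ n * (exp (-s) - expNegTaylor n s)) s := fun s => by
      refine (((hasDerivAt_neg s).exp.sub (hasDerivAt_expNegTaylor_succ n s)).const_mul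
        ((-1 : ℝ) ^ (n + 1))).congr_deriv ?_
      ring
    have hmono : MonotoneOn R (Ici 0) :=
      monotoneOn_of_hasDerivWithinAt_nonneg (convex_Ici 0)
        (fun s _ => (hR s).continuousAt.continuousWithinAt)
        (fun s _ => (hR s).hasDerivWithinAt)
        (fun s hs => ih (interior_subset hs))
    have hR0 : R 0 = 0 := by simp [R, expNegTaylor, Finset.sum_range_succ']
    simpa [hR0] using hmono self_mem_Ici ht ht

lemma expNegTaylor_le_exp_neg {n : ℕ} (hn : Even n) {t : ℝ} (ht : 0 ≤ t) :
    expNegTaylor n t ≤ exp (-t) := by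
  have := neg_one_pow_mul_exp_neg_sub_expNegTaylor_nonneg n ht
  rw [hn.neg_one_pow, one_mul] at this
  linarith

lemma exp_neg_le_expNegTaylor {n : ℕ} (hn : Odd n) {t : ℝ} (ht : 0 ≤ t) :
    exp (-t) ≤ expNegTaylor n t := by
  have := neg_one_pow_mul_exp_neg_sub_expNegTaylor_nonneg n ht
  rw [hn.neg_one_pow] at this
  linarith

lemma integral_expNegTaylor_sq_half (n : ℕ) (c : ℝ) :
    ∫ x in -c..c, expNegTaylor n (x ^ 2 / 2) =
      ∑ i ∈ Finset.range n, (-1 / 2 : ℝ) ^ i / i ! * (2 * c ^ (2 * i + 1) / (2 * i + 1)) := by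
  unfold expNegTaylor
  rw [intervalIntegral.integral_finsetSum fun i _ =>
    (by fun_prop : Continuous _).intervalIntegrable _ _]
  refine Finset.sum_congr rfl fun i _ => ?_
  have hterm : (fun x : ℝ => (-(x ^ 2 / 2)) ^ i / i !) =
      fun x => (-1 / 2 : ℝ) ^ i / i ! * x ^ (2 * i) := by
    funext x
    rw [pow_mul]
    ring
  rw [hterm, intervalIntegral.integral_const_mul, integral_pow,
    (odd_two_mul_add_one i).neg_pow (α := ℝ)]
  push_cast
  ring

lemma gaussianPDFReal_zero_one (x : ℝ) :
    gaussianPDFReal 0 1 x = (√(2 * π))⁻¹ * exp (-x ^ 2 / 2) := by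
  simp [gaussianPDFReal_def]

lemma gaussianReal_abs_ge_eq {c : ℝ} (hc : 0 ≤ c) :
    gaussianReal 0 1 {x | c ≤ |x|} =
      ENNReal.ofReal (1 - (√(2 * π))⁻¹ * ∫ x in -c..c, exp (-x ^ 2 / 2)) := by
  have hcompl : {x : ℝ | c ≤ |x|} = (Ioo (-c) c)ᶜ := by
    ext x
    simp [le_abs', or_iff_not_imp_left]
  have hIoo : ∫ x in Ioo (-c) c, gaussianPDFReal 0 1 x =
      (√(2 * π))⁻¹ * ∫ x in -c..c, exp (-x ^ 2 / 2) := by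
    rw [intervalIntegral.integral_of_le (by linarith), integral_Ioc_eq_integral_Ioo,
      ← integral_const_mul]
    simp only [gaussianPDFReal_zero_one]
  rw [hcompl, prob_compl_eq_one_sub measurableSet_Ioo,
    gaussianReal_apply_eq_integral 0 one_ne_zero, hIoo, ← ENNReal.ofReal_one,
    ← ENNReal.ofReal_sub]
  rw [← hIoo]
  exact setIntegral_nonneg measurableSet_Ioo fun x _ => (gaussianPDFReal_nonneg 0 1 x)

lemma sqrt_two_pi_mem_Ioo : √(2 * π) ∈ Set.Ioo (2.5066 : ℝ) 2.5067 := by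
  constructor
  · rw [lt_sqrt (by norm_num)]
    nlinarith [pi_gt_d6]
  · rw [sqrt_lt' (by norm_num)]
    nlinarith [pi_lt_d6]

lemma integral_exp_neg_sq_half_le {n : ℕ} (hn : Odd n) {c : ℝ} (hc : 0 ≤ c) :
    ∫ x in -c..c, exp (-x ^ 2 / 2) ≤
      ∑ i ∈ Finset.range n, (-1 / 2 : ℝ) ^ i / i ! * (2 * c ^ (2 * i + 1) / (2 * i + 1)) := by
  rw [← integral_expNegTaylor_sq_half]
  refine intervalIntegral.integral_mono_on (by linarith)
    ((by fun_prop : Continuous _).intervalIntegrable _ _)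
    (((continuous_expNegTaylor n).comp (by fun_prop)).intervalIntegrable _ _) fun x _ => ?_
  simpa [neg_div] using exp_neg_le_expNegTaylor hn (by positivity : 0 ≤ x ^ 2 / 2)

lemma le_integral_exp_neg_sq_half {n : ℕ} (hn : Even n) {c : ℝ} (hc : 0 ≤ c) :
    ∑ i ∈ Finset.range n, (-1 / 2 : ℝ) ^ i / i ! * (2 * c ^ (2 * i + 1) / (2 * i + 1)) ≤
      ∫ x in -c..c, exp (-x ^ 2 / 2) := by
  rw [← integral_expNegTaylor_sq_half]
  refine intervalIntegral.integral_mono_on (by linarith)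
    (((continuous_expNegTaylor n).comp (by fun_prop)).intervalIntegrable _ _)
    ((by fun_prop : Continuous _).intervalIntegrable _ _) fun x _ => ?_
  simpa [neg_div] using expNegTaylor_le_exp_neg hn (by positivity : 0 ≤ x ^ 2 / 2)

lemma ofReal_le_gaussianReal_abs_ge_one :
    ENNReal.ofReal 0.317 ≤ gaussianReal 0 1 {x | 1 ≤ |x|} := by
  rw [gaussianReal_abs_ge_eq zero_le_one]
  refine ENNReal.ofReal_le_ofReal ?_
  have hI := integral_exp_neg_sq_half_le (n := 7) (by decide) zero_le_one
  set I := ∫ x in -1..(1 : ℝ), exp (-x ^ 2 / 2)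
  norm_num [Finset.sum_range_succ, Nat.factorial] at hI
  obtain ⟨hs, -⟩ := sqrt_two_pi_mem_Ioo
  have h := div_le_div₀ (by norm_num) hI (by norm_num) hs.le
  rw [inv_mul_eq_div]
  linarith

lemma two_mul_gaussianReal_abs_ge_le_sq :
    2 * gaussianReal 0 1 {x | 1.99 ≤ |x|} ≤ ENNReal.ofReal 0.317 ^ 2 := by
  rw [gaussianReal_abs_ge_eq (by norm_num), ← ENNReal.ofReal_pow (by norm_num),
    ← ENNReal.ofReal_ofNat 2, ← ENNReal.ofReal_mul zero_le_two]
  refine ENNReal.ofReal_le_ofReal ?_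
  have hI := le_integral_exp_neg_sq_half (n := 10) (by decide) (c := 1.99) (by norm_num)
  set I := ∫ x in -1.99..(1.99 : ℝ), exp (-x ^ 2 / 2)
  norm_num [Finset.sum_range_succ, Nat.factorial] at hI
  obtain ⟨-, hs⟩ := sqrt_two_pi_mem_Ioo
  have h := div_le_div₀ (by linarith) hI (by positivity) hs.le
  rw [inv_mul_eq_div]
  linarith

lemma gaussianReal_Iic_neg (v : ℝ≥0) (c : ℝ) :
    gaussianReal 0 v (Iic (-c)) = gaussianReal 0 v (Ici c) := by
  have hmap := gaussianReal_map_neg (μ := 0) (v := v)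
  rw [neg_zero] at hmap
  conv_rhs => rw [← hmap, Measure.map_apply measurable_neg measurableSet_Ici]
  congr 1
  ext x
  simp

lemma gaussianReal_Iic_zero (v : ℝ≥0) : gaussianReal 0 v (Iic 0) = gaussianReal 0 v (Ici 0) := by
  simpa using gaussianReal_Iic_neg v 0

lemma inv_two_le_gaussianReal_Ici_zero (v : ℝ≥0) : 2⁻¹ ≤ gaussianReal 0 v (Ici 0) := by
  have hcover : (1 : ℝ≥0∞) ≤ gaussianReal 0 v (Iic 0) + gaussianReal 0 v (Ici 0) := by
    rw [← measure_univ (μ := gaussianReal 0 v), ← Iic_union_Ici (a := (0 : ℝ))]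
    exact measure_union_le _ _
  rw [gaussianReal_Iic_zero, ← two_mul] at hcover
  rwa [ENNReal.inv_le_iff_le_mul (by simp) (by simp)]

lemma inv_two_le_gaussianReal_Iic_zero (v : ℝ≥0) : 2⁻¹ ≤ gaussianReal 0 v (Iic 0) :=
  (gaussianReal_Iic_zero v).symm ▸ inv_two_le_gaussianReal_Ici_zero v

lemma gaussianReal_abs_ge_le_two_mul (v : ℝ≥0) (c : ℝ) :
    gaussianReal 0 v {x | c ≤ |x|} ≤ 2 * gaussianReal 0 v (Ici c) := by
  calc gaussianReal 0 v {x | c ≤ |x|} ≤ gaussianReal 0 v (Iic (-c) ∪ Ici c) :=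
        measure_mono fun x (hx : c ≤ |x|) => le_abs'.mp hx
    _ ≤ gaussianReal 0 v (Iic (-c)) + gaussianReal 0 v (Ici c) := measure_union_le _ _
    _ = 2 * gaussianReal 0 v (Ici c) := by rw [gaussianReal_Iic_neg, two_mul]

lemma hasDerivAt_neg_exp_neg_sq_half (x : ℝ) :
    HasDerivAt (fun y => -exp (-y ^ 2 / 2)) (x * exp (-x ^ 2 / 2)) x := by
  refine ((((hasDerivAt_id x).fun_pow 2).fun_neg.div_const 2).exp.fun_neg).congr_deriv ?_
  simp
  ring

lemma tendsto_neg_exp_neg_sq_half : Tendsto (fun y : ℝ => -exp (-y ^ 2 / 2)) atTop (𝓝 0) := by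
  have h : Tendsto (fun y : ℝ => -y ^ 2 / 2) atTop atBot := by
    simpa [neg_div] using
      (tendsto_pow_atTop two_ne_zero).atTop_div_const (by norm_num : (0 : ℝ) < 2)
  simpa using (tendsto_exp_atBot.comp h).neg

/-- Mills' inequality. -/
lemma gaussianReal_Ici_le {c : ℝ} (hc : 0 < c) :
    gaussianReal 0 1 (Ici c) ≤ ENNReal.ofReal (gaussianPDFReal 0 1 c / c) := by
  have hderiv := fun x (_ : x ∈ Ici c) => hasDerivAt_neg_exp_neg_sq_half x
  have hpos : ∀ x ∈ Ioi c, 0 ≤ x * exp (-x ^ 2 / 2) := fun x hx =>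
    mul_nonneg (hc.trans hx).le (exp_pos _).le
  have hint := integrableOn_Ioi_deriv_of_nonneg' hderiv hpos tendsto_neg_exp_neg_sq_half
  have hval := integral_Ioi_of_hasDerivAt_of_nonneg' hderiv hpos tendsto_neg_exp_neg_sq_half
  rw [gaussianReal_apply_eq_integral 0 one_ne_zero, integral_Ici_eq_integral_Ioi]
  refine ENNReal.ofReal_le_ofReal ?_
  calc ∫ x in Ioi c, gaussianPDFReal 0 1 x
      ≤ ∫ x in Ioi c, (c⁻¹ * (√(2 * π))⁻¹) * (x * exp (-x ^ 2 / 2)) := by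
        refine setIntegral_mono_on (integrable_gaussianPDFReal 0 1).integrableOn
          (hint.const_mul _) measurableSet_Ioi fun x hx => ?_
        rw [gaussianPDFReal_zero_one]
        calc (√(2 * π))⁻¹ * exp (-x ^ 2 / 2)
            ≤ (c⁻¹ * x) * ((√(2 * π))⁻¹ * exp (-x ^ 2 / 2)) :=
              le_mul_of_one_le_left (by positivity) ((one_le_inv_mul₀ hc).mpr (le_of_lt hx))
          _ = _ := by ring
    _ = gaussianPDFReal 0 1 c / c := by
        rw [integral_const_mul, hval, gaussianPDFReal_zero_one]
        ring

lemma exp_neg_sq_half_le_pow {n : ℕ} (hn : 3 ≤ n) :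
    exp (-((n : ℝ) - 1 / 100) ^ 2 / 2) ≤ 0.317 ^ n := by
  have hn' : (3 : ℝ) ≤ n := by exact_mod_cast hn
  have hbase : exp (-1.4) ≤ 0.317 := by
    rw [exp_neg, inv_le_comm₀ (exp_pos _) (by norm_num)]
    nlinarith [quadratic_le_exp_of_nonneg (x := 1.4) (by norm_num)]
  calc exp (-((n : ℝ) - 1 / 100) ^ 2 / 2) ≤ exp (n * -1.4) := exp_le_exp.mpr (by nlinarith)
    _ = exp (-1.4) ^ n := exp_nat_mul _ n
    _ ≤ 0.317 ^ n := pow_le_pow_left₀ (exp_pos _).le hbase n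

lemma two_mul_gaussianReal_abs_ge_le_pow {n : ℕ} (hn : 2 ≤ n) :
    2 * gaussianReal 0 1 {x | (n : ℝ) - 1 / 100 ≤ |x|} ≤ ENNReal.ofReal 0.317 ^ n := by
  obtain rfl | hn3 := hn.eq_or_lt
  · convert two_mul_gaussianReal_abs_ge_le_sq using 5
    norm_num
  set c := (n : ℝ) - 1 / 100 with hc
  have hc3 : 2.99 ≤ c := by
    have : (3 : ℝ) ≤ n := by exact_mod_cast hn3
    linarith
  have hs := sqrt_two_pi_mem_Ioo.1
  have hreal : 4 * (gaussianPDFReal 0 1 c / c) ≤ 0.317 ^ n := by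
    calc 4 * (gaussianPDFReal 0 1 c / c) = 4 / (√(2 * π) * c) * exp (-c ^ 2 / 2) := by
          rw [gaussianPDFReal_zero_one]
          field_simp
      _ ≤ 1 * exp (-c ^ 2 / 2) := by
          gcongr
          rw [div_le_one (by positivity)]
          nlinarith
      _ ≤ 0.317 ^ n := (one_mul _).trans_le (exp_neg_sq_half_le_pow hn3)
  calc 2 * gaussianReal 0 1 {x | c ≤ |x|} ≤ 2 * (2 * gaussianReal 0 1 (Ici c)) := by
        gcongr
        exact gaussianReal_abs_ge_le_two_mul 1 c
    _ ≤ 2 * (2 * ENNReal.ofReal (gaussianPDFReal 0 1 c / c)) := by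
        gcongr
        exact gaussianReal_Ici_le (by linarith)
    _ = ENNReal.ofReal (4 * (gaussianPDFReal 0 1 c / c)) := by
        rw [ENNReal.ofReal_mul (by norm_num), ← mul_assoc]
        norm_num
    _ ≤ ENNReal.ofReal 0.317 ^ n := by
        rw [← ENNReal.ofReal_pow (by norm_num)]
        exact ENNReal.ofReal_le_ofReal hreal

lemma exists_dyadic_lt_of_lt {f : ℝ → ℝ} (hf : Continuous f) {t a : ℝ} (ht : t ∈ Icc 0 1)
    (h : a < f t) : ∃ j k : ℕ, k ≤ 2 ^ j ∧ a < f (k / 2 ^ j) := by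
  have hlim : Tendsto (fun j : ℕ => (⌊t * 2 ^ j⌋₊ : ℝ) / 2 ^ j) atTop (𝓝 t) :=
    (tendsto_nat_floor_mul_div_atTop ht.1).comp (tendsto_pow_atTop_atTop_of_one_lt one_lt_two)
  obtain ⟨j, hj⟩ := (((hf.tendsto t).comp hlim).eventually (lt_mem_nhds h)).exists
  refine ⟨j, ⌊t * 2 ^ j⌋₊, Nat.floor_le_of_le ?_, hj⟩
  push_cast
  nlinarith [ht.2, pow_pos (two_pos (α := ℝ)) j]

section Levy

variable {Ω : Type*} {mΩ : MeasurableSpace Ω} {P : Measure Ω}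

lemma measure_le_two_mul_measure_inter {A C : Set Ω} (hAC : P (A ∩ C) = P A * P C)
    (hC : 2⁻¹ ≤ P C) : P A ≤ 2 * P (A ∩ C) := by
  calc P A = 2 * (P A * 2⁻¹) := by
        rw [mul_comm, mul_assoc, ENNReal.inv_mul_cancel two_ne_zero ENNReal.ofNat_ne_top, mul_one]
    _ ≤ 2 * P (A ∩ C) := by rw [hAC]; gcongr

lemma measure_le_two_mul_measure_inter_nonneg_mul {F : MeasurableSpace Ω} (hF : F ≤ mΩ)
    {X D : Ω → ℝ} (hX : Measurable[F] X) (hD : Measurable[mΩ] D)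
    (hXD : Indep F (MeasurableSpace.comap D inferInstance) P)
    (hD₁ : 2⁻¹ ≤ P {ω | 0 ≤ D ω}) (hD₂ : 2⁻¹ ≤ P {ω | D ω ≤ 0})
    {A : Set Ω} (hA : MeasurableSet[F] A) :
    P A ≤ 2 * P (A ∩ {ω | 0 ≤ X ω * D ω}) := by
  set A₁ := A ∩ {ω | 0 ≤ X ω}
  set A₂ := A ∩ {ω | X ω < 0}
  have hA₁ : MeasurableSet[F] A₁ := hA.inter (measurableSet_le measurable_const hX)
  have hA₂ : MeasurableSet[F] A₂ := hA.inter (measurableSet_lt hX measurable_const)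
  have hind := (Indep_iff _ _ P).mp hXD
  have h₁ := measure_le_two_mul_measure_inter (hind _ _ hA₁ (measurableSet_le measurable_const
    (comap_measurable D))) hD₁
  have h₂ := measure_le_two_mul_measure_inter (hind _ _ hA₂ (measurableSet_le
    (comap_measurable D) measurable_const)) hD₂
  have hdisj : Disjoint (A₁ ∩ {ω | 0 ≤ D ω}) (A₂ ∩ {ω | D ω ≤ 0}) :=
    Set.disjoint_left.mpr fun ω h₁ h₂ => (show X ω < 0 from h₂.1.2).not_ge h₁.1.2
  have hsub : (A₁ ∩ {ω | 0 ≤ D ω}) ∪ (A₂ ∩ {ω | D ω ≤ 0}) ⊆ A ∩ {ω | 0 ≤ X ω * D ω} := by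
    rintro ω (⟨⟨hωA, hX⟩, hD⟩ | ⟨⟨hωA, hX⟩, hD⟩)
    · exact ⟨hωA, show 0 ≤ X ω * D ω from mul_nonneg hX hD⟩
    · exact ⟨hωA, show 0 ≤ X ω * D ω from mul_nonneg_of_nonpos_of_nonpos (le_of_lt hX) hD⟩
  calc P A ≤ P A₁ + P A₂ := by
        refine (measure_mono fun ω hω => ?_).trans (measure_union_le A₁ A₂)
        rcases le_or_gt 0 (X ω) with h | h
        exacts [Or.inl ⟨hω, h⟩, Or.inr ⟨hω, h⟩]
    _ ≤ 2 * P (A₁ ∩ {ω | 0 ≤ D ω}) + 2 * P (A₂ ∩ {ω | D ω ≤ 0}) := add_le_add h₁ h₂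
    _ = 2 * P ((A₁ ∩ {ω | 0 ≤ D ω}) ∪ (A₂ ∩ {ω | D ω ≤ 0})) := by
        rw [measure_union hdisj ((hF _ hA₂).inter (measurableSet_le hD measurable_const)), mul_add]
    _ ≤ 2 * P (A ∩ {ω | 0 ≤ X ω * D ω}) := by gcongr

variable {S : ℕ → Ω → ℝ} {a : ℝ}

def firstPassage (S : ℕ → Ω → ℝ) (a : ℝ) (k : ℕ) : Set Ω :=
  {ω | a ≤ |S k ω| ∧ ∀ l < k, |S l ω| < a}

lemma pairwise_disjoint_firstPassage : Pairwise (Disjoint on firstPassage S a) := by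
  intro k l hkl
  wlog h : k < l generalizing k l
  · exact (this hkl.symm (hkl.lt_or_gt.resolve_left h)).symm
  exact Set.disjoint_left.mpr fun ω hk hl => (not_le.mpr (hl.2 k h)) hk.1

lemma setOf_exists_le_abs_subset_biUnion_firstPassage (m : ℕ) :
    {ω | ∃ k ≤ m, a ≤ |S k ω|} ⊆ ⋃ k ∈ Finset.range (m + 1), firstPassage S a k := by
  classical
  rintro ω ⟨k, hkm, hk⟩
  have hex : ∃ j, a ≤ |S j ω| := ⟨k, hk⟩
  refine mem_biUnion (x := Nat.find hex) ?_ ⟨Nat.find_spec hex, fun l hl => ?_⟩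
  · exact Finset.mem_range.mpr (Nat.lt_succ_of_le ((Nat.find_min' hex hk).trans hkm))
  · exact not_le.mp (Nat.find_min hex hl)

lemma measurableSet_firstPassage {F : MeasurableSpace Ω} {k : ℕ}
    (hS : ∀ l ≤ k, Measurable[F] (S l)) : MeasurableSet[F] (firstPassage S a k) := by
  simp only [firstPassage, ofPred_and, ofPred_forall]
  exact (measurableSet_le measurable_const (hS k le_rfl).abs).inter
    (MeasurableSet.iInter fun l => MeasurableSet.iInter fun hl =>
      measurableSet_lt (hS l hl.le).abs measurable_const)

/-- Lévy's maximal inequality. -/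
theorem measure_exists_le_abs_le_two_mul {m : ℕ} (hS : ∀ k, Measurable (S k))
    (hindep : ∀ k ≤ m, Indep (⨆ l ≤ k, MeasurableSpace.comap (S l) inferInstance)
      (MeasurableSpace.comap (S m - S k) inferInstance) P)
    (hnonneg : ∀ k ≤ m, 2⁻¹ ≤ P {ω | 0 ≤ S m ω - S k ω})
    (hnonpos : ∀ k ≤ m, 2⁻¹ ≤ P {ω | S m ω - S k ω ≤ 0}) :
    P {ω | ∃ k ≤ m, a ≤ |S k ω|} ≤ 2 * P {ω | a ≤ |S m ω|} := by
  set G : ℕ → Set Ω := fun k => firstPassage S a k ∩ {ω | 0 ≤ S k ω * (S m ω - S k ω)}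
  have hpast : ∀ k, ∀ l ≤ k,
      Measurable[⨆ l ≤ k, MeasurableSpace.comap (S l) inferInstance] (S l) :=
    fun k l hl => Measurable.of_comap_le
      (le_iSup₂ (f := fun l (_ : l ≤ k) => MeasurableSpace.comap (S l) inferInstance) l hl)
  have hle : ∀ k, (⨆ l ≤ k, MeasurableSpace.comap (S l) inferInstance) ≤ mΩ :=
    fun k => iSup₂_le fun l _ => (hS l).comap_le
  have hG : ∀ k ≤ m, P (firstPassage S a k) ≤ 2 * P (G k) := fun k hk =>
    measure_le_two_mul_measure_inter_nonneg_mul (hle k) (hpast k k le_rfl)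
      ((hS m).sub (hS k)) (hindep k hk) (hnonneg k hk) (hnonpos k hk)
      (measurableSet_firstPassage (hpast k))
  have hGsub : (⋃ k ∈ Finset.range (m + 1), G k) ⊆ {ω | a ≤ |S m ω|} := by
    intro ω hω
    obtain ⟨k, -, ⟨hka, -⟩, hsign⟩ := mem_iUnion₂.mp hω
    have : |S k ω| ≤ |S m ω| := sq_le_sq.mp (by nlinarith [hsign.out])
    exact hka.trans this
  calc P {ω | ∃ k ≤ m, a ≤ |S k ω|} ≤ P (⋃ k ∈ Finset.range (m + 1), firstPassage S a k) :=
        measure_mono (setOf_exists_le_abs_subset_biUnion_firstPassage m)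
    _ ≤ ∑ k ∈ Finset.range (m + 1), P (firstPassage S a k) := measure_biUnion_finset_le _ _
    _ ≤ ∑ k ∈ Finset.range (m + 1), 2 * P (G k) :=
        Finset.sum_le_sum fun k hk => hG k (Nat.lt_succ_iff.mp (Finset.mem_range.mp hk))
    _ = 2 * P (⋃ k ∈ Finset.range (m + 1), G k) := by
        rw [← Finset.mul_sum, ← measure_biUnion_finset (f := G)
          (fun k _ l _ hkl => (pairwise_disjoint_firstPassage hkl).mono inter_subset_left
            inter_subset_left)
          fun k _ => (hle k _ (measurableSet_firstPassage (hpast k))).inter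
            (measurableSet_le measurable_const ((hS k).mul ((hS m).sub (hS k))))]
    _ ≤ 2 * P {ω | a ≤ |S m ω|} := by gcongr

end Levy

section Brownian

variable {Ω : Type*} {mΩ : MeasurableSpace Ω} {P : Measure Ω} {B : ℝ → Ω → ℝ}

def HasGaussianIncrements (B : ℝ → Ω → ℝ) (P : Measure Ω) : Prop :=
  ∀ s t : ℝ, 0 ≤ s → s ≤ t →
    Measure.map (fun ω => B t ω - B s ω) P = gaussianReal 0 ((t - s).toNNReal)

def HasIndepIncrements (B : ℝ → Ω → ℝ) (P : Measure Ω) : Prop :=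
  ∀ (n : ℕ) (t : Fin (n + 1) → ℝ), Monotone t → 0 ≤ t 0 →
    iIndepFun (fun i : Fin n => fun ω => B (t i.succ) ω - B (t i.castSucc) ω) P

lemma sum_fin_filter_sub {M : Type*} [AddCommGroup M] (f : ℕ → M) {k l m : ℕ} (hkl : k ≤ l)
    (hlm : l ≤ m) :
    ∑ i ∈ Finset.univ.filter (fun i : Fin m => k ≤ (i : ℕ) ∧ (i : ℕ) < l), (f (i + 1) - f i) =
      f l - f k := by
  rw [Finset.sum_filter,
    Fin.sum_univ_eq_sum_range (fun i => if k ≤ i ∧ i < l then f (i + 1) - f i else 0),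
    ← Finset.sum_filter, ← Finset.sum_Ico_sub f hkl]
  congr 1
  ext i
  simp only [Finset.mem_filter, Finset.mem_range, Finset.mem_Ico]
  omega

lemma indep_iSup_comap_sub (hmeas : ∀ t, Measurable (B t)) (hB0 : ∀ ω, B 0 ω = 0)
    (hindep : HasIndepIncrements B P)
    {t : ℕ → ℝ} (ht : Monotone t) (ht0 : t 0 = 0) {k m : ℕ} (hkm : k ≤ m) :
    Indep (⨆ l ≤ k, MeasurableSpace.comap (B (t l)) inferInstance)
      (MeasurableSpace.comap (B (t m) - B (t k)) inferInstance) P := by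
  set Y : Fin m → Ω → ℝ := fun i ω => B (t (i + 1)) ω - B (t i) ω
  have hY : iIndepFun Y P := by
    have := hindep m (fun i => t i) (fun i j hij => ht hij) (by simp [ht0])
    simpa only [Fin.val_succ, Fin.val_castSucc] using this
  have hYm : ∀ i, Measurable (Y i) := fun i => (hmeas _).sub (hmeas _)
  have hsplit := indep_iSup_of_disjoint (fun i => (hYm i).comap_le)
    ((iIndepFun_iff_iIndep _ _ _).mp hY) (S := {i | (i : ℕ) < k}) (T := {i | k ≤ (i : ℕ)})
    (Set.disjoint_left.mpr fun i (h₁ : (i : ℕ) < k) (h₂ : k ≤ (i : ℕ)) => h₂.not_gt h₁)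
  have hsum : ∀ {s : Set (Fin m)} {k' l : ℕ}, k' ≤ l → l ≤ m →
      (∀ i : Fin m, k' ≤ (i : ℕ) → (i : ℕ) < l → i ∈ s) →
      Measurable[⨆ i ∈ s, MeasurableSpace.comap (Y i) inferInstance] (B (t l) - B (t k')) := by
    intro s k' l hkl hlm hs
    have heq : B (t l) - B (t k') = fun ω =>
        ∑ i ∈ Finset.univ.filter (fun i : Fin m => k' ≤ (i : ℕ) ∧ (i : ℕ) < l), Y i ω := by
      funext ω
      exact (sum_fin_filter_sub (fun j => B (t j) ω) hkl hlm).symm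
    rw [heq]
    refine Finset.measurable_sum _ fun i hi => ?_
    simp only [Finset.mem_filter, Finset.mem_univ, true_and] at hi
    exact (comap_measurable (Y i)).mono
      (le_iSup₂ (f := fun j (_ : j ∈ s) => MeasurableSpace.comap (Y j) inferInstance) i
        (hs i hi.1 hi.2)) le_rfl
  refine indep_of_indep_of_le_right (indep_of_indep_of_le_left hsplit ?_) ?_
  · refine iSup₂_le fun l hl => Measurable.comap_le ?_
    have hB0' : B 0 = 0 := funext hB0
    simpa [ht0, hB0'] using hsum (Nat.zero_le l) (hl.trans hkm) fun i _ hi => hi.trans_le hl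
  · exact (hsum hkm le_rfl fun i hi _ => hi).comap_le

lemma measure_sub_mem (hmeas : ∀ t, Measurable (B t))
    (hgauss : HasGaussianIncrements B P)
    {s t : ℝ} (hs : 0 ≤ s) (hst : s ≤ t) {A : Set ℝ} (hA : MeasurableSet A) :
    P {ω | B t ω - B s ω ∈ A} = gaussianReal 0 (t - s).toNNReal A := by
  rw [← hgauss s t hs hst,
    Measure.map_apply (f := fun ω => B t ω - B s ω) ((hmeas t).sub (hmeas s)) hA]
  rfl

lemma measure_le_abs_one (hmeas : ∀ t, Measurable (B t)) (hB0 : ∀ ω, B 0 ω = 0)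
    (hgauss : HasGaussianIncrements B P) (a : ℝ) :
    P {ω | a ≤ |B 1 ω|} = gaussianReal 0 1 {x | a ≤ |x|} := by
  simpa [hB0] using measure_sub_mem hmeas hgauss le_rfl zero_le_one
    (measurableSet_le measurable_const measurable_abs)

lemma measure_exists_le_abs_le (hmeas : ∀ t, Measurable (B t)) (hB0 : ∀ ω, B 0 ω = 0)
    (hgauss : HasGaussianIncrements B P)
    (hindep : HasIndepIncrements B P)
    {t : ℕ → ℝ} (ht : Monotone t) (ht0 : t 0 = 0) {m : ℕ} (htm : t m = 1) (a : ℝ) :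
    P {ω | ∃ k ≤ m, a ≤ |B (t k) ω|} ≤ 2 * gaussianReal 0 1 {x | a ≤ |x|} := by
  have ht_nonneg : ∀ k, 0 ≤ t k := fun k => ht0 ▸ ht (Nat.zero_le k)
  rw [← measure_le_abs_one hmeas hB0 hgauss, ← htm]
  refine measure_exists_le_abs_le_two_mul (S := fun k => B (t k)) (fun k => hmeas _)
    (fun k hk => indep_iSup_comap_sub hmeas hB0 hindep ht ht0 hk) (fun k hk => ?_) (fun k hk => ?_)
  · exact (inv_two_le_gaussianReal_Ici_zero _).trans_eq
      (measure_sub_mem hmeas hgauss (ht_nonneg k) (ht hk) measurableSet_Ici).symm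
  · exact (inv_two_le_gaussianReal_Iic_zero _).trans_eq
      (measure_sub_mem hmeas hgauss (ht_nonneg k) (ht hk) measurableSet_Iic).symm

lemma measure_le_iSup_abs_le (hmeas : ∀ t, Measurable (B t)) (hB0 : ∀ ω, B 0 ω = 0)
    (hcont : ∀ᵐ ω ∂P, Continuous fun t => B t ω)
    (hgauss : HasGaussianIncrements B P)
    (hindep : HasIndepIncrements B P)
    {a r : ℝ} (har : a < r) :
    P {ω | r ≤ ⨆ t : Icc (0 : ℝ) 1, |B t ω|} ≤ 2 * gaussianReal 0 1 {x | a ≤ |x|} := by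
  set H : ℕ → Set Ω := fun j => {ω | ∃ k : ℕ, k ≤ 2 ^ j ∧ a ≤ |B (k / 2 ^ j) ω|}
  have hH : Monotone H := by
    refine monotone_nat_of_le_succ fun j ω ⟨k, hk, hω⟩ => ⟨2 * k, by rw [pow_succ]; omega, ?_⟩
    rwa [show ((2 * k : ℕ) : ℝ) / 2 ^ (j + 1) = k / 2 ^ j by push_cast; rw [pow_succ]; field_simp]
  have hsub : {ω | r ≤ ⨆ t : Icc (0 : ℝ) 1, |B t ω|} ≤ᵐ[P] ⋃ j, H j := by
    filter_upwards [hcont] with ω hω hsup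
    obtain ⟨t, ht⟩ := exists_lt_of_lt_ciSup (har.trans_le hsup)
    obtain ⟨j, k, hk, hjk⟩ := exists_dyadic_lt_of_lt hω.abs t.2 ht
    exact mem_iUnion.mpr ⟨j, k, hk, hjk.le⟩
  calc P {ω | r ≤ ⨆ t : Icc (0 : ℝ) 1, |B t ω|} ≤ P (⋃ j, H j) := measure_mono_ae hsub
    _ = ⨆ j, P (H j) := hH.measure_iUnion
    _ ≤ 2 * gaussianReal 0 1 {x | a ≤ |x|} := iSup_le fun j =>
        measure_exists_le_abs_le hmeas hB0 hgauss hindep (t := fun k : ℕ => k / 2 ^ j) (m := 2 ^ j)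
          (fun k l hkl => div_le_div_of_nonneg_right (by exact_mod_cast hkl) (by positivity))
          (by simp) (by simp) a

lemma gaussianReal_le_measure_le_iSup_abs (hmeas : ∀ t, Measurable (B t))
    (hB0 : ∀ ω, B 0 ω = 0) (hcont : ∀ᵐ ω ∂P, Continuous fun t => B t ω)
    (hgauss : HasGaussianIncrements B P) (a : ℝ) :
    gaussianReal 0 1 {x | a ≤ |x|} ≤ P {ω | a ≤ ⨆ t : Icc (0 : ℝ) 1, |B t ω|} := by
  rw [← measure_le_abs_one hmeas hB0 hgauss]
  refine measure_mono_ae (hcont.mono fun ω hω (h : a ≤ |B 1 ω|) => h.trans ?_)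
  refine le_ciSup (f := fun t : Icc (0 : ℝ) 1 => |B t ω|) ?_ ⟨1, right_mem_Icc.mpr zero_le_one⟩
  refine ((isCompact_Icc (a := (0 : ℝ)) (b := 1)).bddAbove_image hω.abs.continuousOn).mono ?_
  rintro _ ⟨t, rfl⟩
  exact ⟨t, t.2, rfl⟩

end Brownian

end BrownianSupTail

end

open BrownianSupTail

/-- For a standard one-dimensional Brownian motion `B`, for every `λ ≥ 1`,
`P(sup_{t ∈ [0,1]} |B_t| ≥ λ) ≤ P(sup_{t ∈ [0,1]} |B_t| ≥ 1)^⌊λ⌋`. -/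
theorem brownian_sup_tail_power
    {Ω : Type*} [MeasurableSpace Ω] (P : Measure Ω) [IsProbabilityMeasure P]
    (B : ℝ → Ω → ℝ) (hmeas : ∀ t, Measurable (B t))
    (hB0 : ∀ ω, B 0 ω = 0)
    (hcont : ∀ᵐ ω ∂P, Continuous fun t => B t ω)
    (hgauss : ∀ s t : ℝ, 0 ≤ s → s ≤ t →
      Measure.map (fun ω => B t ω - B s ω) P = gaussianReal 0 ((t - s).toNNReal))
    (hindep : ∀ (n : ℕ) (t : Fin (n + 1) → ℝ), Monotone t → 0 ≤ t 0 →
      iIndepFun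
        (fun i : Fin n => fun ω => B (t i.succ) ω - B (t i.castSucc) ω) P) :
    ∀ lam : ℝ, 1 ≤ lam →
      P {ω | lam ≤ ⨆ t : Set.Icc (0 : ℝ) 1, |B t ω|} ≤
        (P {ω | 1 ≤ ⨆ t : Set.Icc (0 : ℝ) 1, |B t ω|}) ^ (Nat.floor lam) := by
  intro lam hlam
  set n := ⌊lam⌋₊
  have hfloor : P {ω | lam ≤ ⨆ t : Icc (0 : ℝ) 1, |B t ω|} ≤
      P {ω | (n : ℝ) ≤ ⨆ t : Icc (0 : ℝ) 1, |B t ω|} :=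
    measure_mono fun ω (h : lam ≤ _) => (Nat.floor_le (by linarith)).trans h
  obtain hn | hn : n = 1 ∨ 2 ≤ n := by
    have := (Nat.one_le_floor_iff lam).mpr hlam
    omega
  · simpa [hn] using hfloor
  calc P {ω | lam ≤ ⨆ t : Icc (0 : ℝ) 1, |B t ω|}
      ≤ P {ω | (n : ℝ) ≤ ⨆ t : Icc (0 : ℝ) 1, |B t ω|} := hfloor
    _ ≤ 2 * gaussianReal 0 1 {x | (n : ℝ) - 1 / 100 ≤ |x|} :=
        measure_le_iSup_abs_le hmeas hB0 hcont hgauss hindep (by linarith)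
    _ ≤ ENNReal.ofReal 0.317 ^ n := two_mul_gaussianReal_abs_ge_le_pow hn
    _ ≤ gaussianReal 0 1 {x | 1 ≤ |x|} ^ n := by gcongr; exact ofReal_le_gaussianReal_abs_ge_one
    _ ≤ P {ω | 1 ≤ ⨆ t : Icc (0 : ℝ) 1, |B t ω|} ^ n := by
        gcongr
        exact gaussianReal_le_measure_le_iSup_abs hmeas hB0 hcont hgauss 1
end
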